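/- arXiv:math/0411607 — 2 statements merged into one kernel-verified Lean document; each statement's English description precedes it below -/
import Mathlib

section
/- For the trilinear form Λ^1(f₁,f₂,f₃) = Σ_I |I|^{-1/2} ⟨f₁,Φ¹_I⟩⟨f₂,Φ²_I⟩⟨f₃,Φ³_I⟩ over a finite family of dyadic intervals I, where Φ²_I and Φ³_I have mean zero, one has the pointwise domination |Σ_I |I|^{-3/2} |⟨f₁,Φ¹_I⟩||⟨f₂,Φ²_I⟩||⟨f₃,Φ³_I⟩| χ_I(x)| ≲ M(f₁)(x) · S(f₂)(x) · S(f₃)(x) for a.e. x ∈ ℝ, where M is the Hardy–Littlewood maximal function and S(f)(x) = (Σ_I |⟨f,Φ_I⟩|²/|I| · χ_I(x))^{1/2}. -/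
open MeasureTheory Set
open scoped ENNReal

noncomputable section

/-- `φ` is a bump function adapted to the interval with center `x0` and length `L`,
with constants `C l α`. -/
def IsBump (C : ℕ → ℕ → ℝ) (x0 L : ℝ) (φ : ℝ → ℂ) : Prop :=
  ContDiff ℝ (⊤ : ℕ∞) φ ∧ ∀ (l α : ℕ) (x : ℝ),
    ‖iteratedDeriv l φ x‖ ≤
      C l α / (L ^ l * (1 + Metric.infDist x (Set.Icc (x0 - L / 2) (x0 + L / 2)) / L) ^ α)

/-- `Φ` is an `L²`-normalized bump adapted to the interval with center `x0`, length `L`. -/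
def IsNormBump (C : ℕ → ℕ → ℝ) (x0 L : ℝ) (Φ : ℝ → ℂ) : Prop :=
  IsBump C x0 L (fun x => (Real.sqrt L : ℂ) * Φ x)

/-- length of the dyadic interval `2^k [n, n+1]` encoded as `(k, n)`. -/
def dyadLen (p : ℤ × ℤ) : ℝ := (2 : ℝ) ^ p.1

/-- center of the dyadic interval `2^k [n, n+1]`. -/
def dyadCenter (p : ℤ × ℤ) : ℝ := (2 : ℝ) ^ p.1 * ((p.2 : ℝ) + 1 / 2)

/-- the dyadic interval `2^k [n, n+1]` as a set. -/
def dyadIcc (p : ℤ × ℤ) : Set ℝ :=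
  Set.Icc ((2 : ℝ) ^ p.1 * (p.2 : ℝ)) ((2 : ℝ) ^ p.1 * ((p.2 : ℝ) + 1))

/-- `ℝ≥0∞`-valued indicator of a dyadic interval. -/
def indE (p : ℤ × ℤ) (x : ℝ) : ℝ≥0∞ := Set.indicator (dyadIcc p) (fun _ => (1 : ℝ≥0∞)) x

/-- complex scalar product on the line. -/
def pair (f g : ℝ → ℂ) : ℂ := ∫ x : ℝ, f x * (starRingEnd ℂ) (g x)

/-- complex pairing of `g : ℝ² → ℂ` against a tensor product `φ ⊗ ψ`. -/
def pair2 (g : ℝ × ℝ → ℂ) (φ ψ : ℝ → ℂ) : ℂ :=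
  ∫ z : ℝ × ℝ, g z * (starRingEnd ℂ) (φ z.1) * (starRingEnd ℂ) (ψ z.2)

/-- partial pairing in the first variable. -/
def pairFst (g : ℝ × ℝ → ℂ) (φ : ℝ → ℂ) (y : ℝ) : ℂ :=
  ∫ x : ℝ, g (x, y) * (starRingEnd ℂ) (φ x)

/-- partial pairing in the second variable. -/
def pairSnd (g : ℝ × ℝ → ℂ) (ψ : ℝ → ℂ) (x : ℝ) : ℂ :=
  ∫ y : ℝ, g (x, y) * (starRingEnd ℂ) (ψ y)

/-- Hardy–Littlewood maximal function (over intervals). -/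
def HLM (f : ℝ → ℂ) (x : ℝ) : ℝ≥0∞ :=
  ⨆ (a : ℝ) (b : ℝ) (_ : a < b) (_ : x ∈ Set.Icc a b),
    ENNReal.ofReal ((b - a)⁻¹ * ∫ y in Set.Icc a b, ‖f y‖)

/-- strong (bi-parameter) maximal function on `ℝ²`. -/
def MM2 (F : ℝ × ℝ → ℝ) (z : ℝ × ℝ) : ℝ≥0∞ :=
  ⨆ (a : ℝ) (b : ℝ) (c : ℝ) (d : ℝ) (_ : a < b) (_ : c < d)
      (_ : z ∈ Set.Icc a b ×ˢ Set.Icc c d),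
    ENNReal.ofReal (((b - a) * (d - c))⁻¹ * ∫ w in Set.Icc a b ×ˢ Set.Icc c d, ‖F w‖)

/-- dyadic rectangle as a subset of `ℝ²`. -/
def rectSet (q : (ℤ × ℤ) × (ℤ × ℤ)) : Set (ℝ × ℝ) := dyadIcc q.1 ×ˢ dyadIcc q.2

/-- Littlewood–Paley square function associated to a finite family of dyadic intervals. -/
def Sq (𝒟 : Finset (ℤ × ℤ)) (Φ : ℤ × ℤ → ℝ → ℂ) (f : ℝ → ℂ) (x : ℝ) : ℝ :=
  Real.sqrt (∑ p ∈ 𝒟, ‖pair f (Φ p)‖ ^ 2 / dyadLen p * Set.indicator (dyadIcc p) (fun _ => (1 : ℝ)) x)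

/-- length of the dilated dyadic interval `I_{λ,t} = 2^{k+λ}[n+t,n+t+1]`. -/
def plen (k : ℤ) (lam : ℝ) : ℝ := (2 : ℝ) ^ ((k : ℝ) + lam)

/-- center of the dilated/translated dyadic interval `I_{λ,t}`. -/
def pcen (p : ℤ × ℤ) (lam t : ℝ) : ℝ := plen p.1 lam * ((p.2 : ℝ) + t + 1 / 2)

/-- a family of `L²`-normalized bumps adapted to the intervals `I_{λ,t}`. -/
def AdaptedFam (C : ℕ → ℕ → ℝ) (Φ : ℤ × ℤ → ℝ → ℝ → ℝ → ℂ) : Prop :=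
  ∀ p : ℤ × ℤ, ∀ lam ∈ Set.Icc (0 : ℝ) 1, ∀ t ∈ Set.Icc (0 : ℝ) 1,
    IsNormBump C (pcen p lam t) (plen p.1 lam) (Φ p lam t)

/-- the square-maximal function `SM` (with supremum over translation/dilation parameters). -/
def SMfun (𝒟 : Finset ((ℤ × ℤ) × (ℤ × ℤ))) (ΦI ΦJ : ℤ × ℤ → ℝ → ℝ → ℝ → ℂ)
    (g : ℝ × ℝ → ℂ) (z : ℝ × ℝ) : ℝ≥0∞ :=
  (∑ I ∈ 𝒟.image Prod.fst,
      (⨆ (J : ℤ × ℤ) (_ : (I, J) ∈ 𝒟) (l1 ∈ Set.Icc (0 : ℝ) 1) (l2 ∈ Set.Icc (0 : ℝ) 1)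
          (t1 ∈ Set.Icc (0 : ℝ) 1) (t2 ∈ Set.Icc (0 : ℝ) 1),
          ENNReal.ofReal (‖pair2 g (ΦI I l1 t1) (ΦJ J l2 t2)‖ ^ 2 / dyadLen J) * indE J z.2)
        * (ENNReal.ofReal (dyadLen I))⁻¹ * indE I z.1) ^ (1 / 2 : ℝ)

/-- the square-maximal function `SM` (without the parameter suprema). -/
def SMfun0 (𝒟 : Finset ((ℤ × ℤ) × (ℤ × ℤ))) (ΦI ΦJ : ℤ × ℤ → ℝ → ℂ)
    (g : ℝ × ℝ → ℂ) (z : ℝ × ℝ) : ℝ≥0∞ :=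
  (∑ I ∈ 𝒟.image Prod.fst,
      (⨆ (J : ℤ × ℤ) (_ : (I, J) ∈ 𝒟),
          ENNReal.ofReal (‖pair2 g (ΦI I) (ΦJ J)‖ ^ 2 / dyadLen J) * indE J z.2)
        * (ENNReal.ofReal (dyadLen I))⁻¹ * indE I z.1) ^ (1 / 2 : ℝ)

/-- the maximal-square function `MS`. -/
def MSfun0 (𝒟 : Finset ((ℤ × ℤ) × (ℤ × ℤ))) (ΦI ΦJ : ℤ × ℤ → ℝ → ℂ)
    (f : ℝ × ℝ → ℂ) (z : ℝ × ℝ) : ℝ≥0∞ :=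
  ⨆ I : ℤ × ℤ,
    ((ENNReal.ofReal (dyadLen I))⁻¹ *
        ∑ q ∈ 𝒟.filter (fun q => q.1 = I),
          ENNReal.ofReal (‖pair2 f (ΦI I) (ΦJ q.2)‖ ^ 2 / dyadLen q.2) * indE q.2 z.2) ^ (1 / 2 : ℝ)
      * indE I z.1

/-- the double square function `SS`. -/
def SSfun (𝒟 : Finset ((ℤ × ℤ) × (ℤ × ℤ))) (ΦI ΦJ : ℤ × ℤ → ℝ → ℂ)
    (h : ℝ × ℝ → ℂ) (z : ℝ × ℝ) : ℝ≥0∞ :=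
  (∑ q ∈ 𝒟, ENNReal.ofReal (‖pair2 h (ΦI q.1) (ΦJ q.2)‖ ^ 2 / (dyadLen q.1 * dyadLen q.2))
      * indE q.1 z.1 * indE q.2 z.2) ^ (1 / 2 : ℝ)

lemma hlm_avg (f : ℝ → ℂ) (hf : MeasureTheory.LocallyIntegrable f MeasureTheory.volume)
    {a b x : ℝ} (hab : a < b) (hx : x ∈ Icc a b) :
    ∫⁻ y in Icc a b, ENNReal.ofReal ‖f y‖ ≤ ENNReal.ofReal (b - a) * HLM f x := by
  have hint : IntegrableOn f (Icc a b) volume := hf.integrableOn_isCompact isCompact_Icc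
  have hnorm : Integrable (fun y => ‖f y‖) (volume.restrict (Icc a b)) := hint.norm
  have h1 : ∫⁻ y in Icc a b, ENNReal.ofReal ‖f y‖ =
      ENNReal.ofReal (∫ y in Icc a b, ‖f y‖) := by
    rw [ofReal_integral_eq_lintegral_ofReal hnorm]
    exact Filter.Eventually.of_forall fun y => norm_nonneg _
  rw [h1]
  have h2 : ENNReal.ofReal ((b - a)⁻¹ * ∫ y in Icc a b, ‖f y‖) ≤ HLM f x := by
    refine le_iSup_of_le a ?_
    refine le_iSup_of_le b ?_
    refine le_iSup_of_le hab ?_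
    exact le_iSup_of_le hx le_rfl
  calc ENNReal.ofReal (∫ y in Icc a b, ‖f y‖)
      = ENNReal.ofReal ((b - a) * ((b - a)⁻¹ * ∫ y in Icc a b, ‖f y‖)) := by
        rw [← mul_assoc, mul_inv_cancel₀ (by linarith), one_mul]
    _ = ENNReal.ofReal (b - a) * ENNReal.ofReal ((b - a)⁻¹ * ∫ y in Icc a b, ‖f y‖) := by
        rw [ENNReal.ofReal_mul (by linarith)]
    _ ≤ ENNReal.ofReal (b - a) * HLM f x := by exact mul_le_mul_right h2 _

lemma key_bound (A L lo : ℝ) (hL : 0 < L) (f Φ : ℝ → ℂ)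
    (hf : MeasureTheory.LocallyIntegrable f MeasureTheory.volume)
    (hΦ : ∀ y : ℝ, ‖Φ y‖ ≤ A / (Real.sqrt L * (1 + Metric.infDist y (Icc lo (lo + L)) / L) ^ 2))
    {x : ℝ} (hx : x ∈ Icc lo (lo + L)) :
    ENNReal.ofReal ‖pair f Φ‖ ≤ ENNReal.ofReal (32 * A * Real.sqrt L) * HLM f x := by
  classical
  have hsL : 0 < Real.sqrt L := Real.sqrt_pos.mpr hL
  have hL2 : Real.sqrt L * Real.sqrt L = L := Real.mul_self_sqrt hL.le
  have hIne : (Icc lo (lo + L)).Nonempty := nonempty_Icc.mpr (by linarith)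
  have hA : 0 ≤ A := by
    have h0 := (norm_nonneg (Φ lo)).trans (hΦ lo)
    have hd : 0 ≤ Metric.infDist lo (Icc lo (lo + L)) := Metric.infDist_nonneg
    have hden : 0 < Real.sqrt L * (1 + Metric.infDist lo (Icc lo (lo + L)) / L) ^ 2 := by
      positivity
    rcases div_nonneg_iff.mp h0 with ⟨h, _⟩ | ⟨_, h⟩
    · exact h
    · linarith
  -- step 1 : bound by lintegral
  have step1 : ENNReal.ofReal ‖pair f Φ‖ ≤
      ∫⁻ y, ENNReal.ofReal ‖f y‖ * ENNReal.ofReal ‖Φ y‖ := by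
    have h := norm_integral_le_lintegral_norm (μ := volume)
      (fun y : ℝ => f y * (starRingEnd ℂ) (Φ y))
    have heq : ∀ y : ℝ, ENNReal.ofReal ‖f y * (starRingEnd ℂ) (Φ y)‖ =
        ENNReal.ofReal ‖f y‖ * ENNReal.ofReal ‖Φ y‖ := by
      intro y
      rw [norm_mul, ENNReal.ofReal_mul (norm_nonneg _), RCLike.norm_conj]
    calc ENNReal.ofReal ‖pair f Φ‖
        ≤ ENNReal.ofReal ((∫⁻ y, ENNReal.ofReal ‖f y * (starRingEnd ℂ) (Φ y)‖).toReal) :=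
          ENNReal.ofReal_le_ofReal h
      _ ≤ ∫⁻ y, ENNReal.ofReal ‖f y * (starRingEnd ℂ) (Φ y)‖ := ENNReal.ofReal_toReal_le
      _ = ∫⁻ y, ENNReal.ofReal ‖f y‖ * ENNReal.ofReal ‖Φ y‖ := by simp_rw [heq]
  -- the annuli
  set J : ℕ → Set ℝ := fun j => Icc (lo - 2 ^ j * L) (lo + L + 2 ^ j * L) with hJ
  set D : ℕ → Set ℝ := fun j => match j with
    | 0 => J 0
    | (n+1) => J (n+1) \ J n with hD
  have hJmeas : ∀ j, MeasurableSet (J j) := fun j => measurableSet_Icc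
  have hDmeas : ∀ j, MeasurableSet (D j) := by
    intro j
    cases j with
    | zero => exact hJmeas 0
    | succ n => exact (hJmeas (n+1)).diff (hJmeas n)
  have hDJ : ∀ j, D j ⊆ J j := by
    intro j
    cases j with
    | zero => exact le_rfl
    | succ n => exact diff_subset
  have hUnion : (⋃ j, D j) = univ := by
    ext y
    simp only [mem_iUnion, mem_univ, iff_true]
    have hex : ∃ n : ℕ, y ∈ J n := by
      obtain ⟨n, hn⟩ := exists_nat_ge (|y - lo| / L)
      refine ⟨n, ?_⟩
      have h2n : (n : ℝ) ≤ 2 ^ n := by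
        exact_mod_cast Nat.le_of_lt (Nat.lt_two_pow_self)
      have habs : |y - lo| ≤ 2 ^ n * L := by
        have := (div_le_iff₀ hL).mp hn
        nlinarith
      have h1 := abs_le.mp habs
      constructor <;> [linarith [h1.1]; linarith [h1.2]]
    refine ⟨Nat.find hex, ?_⟩
    cases h : Nat.find hex with
    | zero => simpa [hD, h] using (h ▸ Nat.find_spec hex)
    | succ m =>
        refine ⟨h ▸ Nat.find_spec hex, Nat.find_min hex ?_⟩
        omega
  have hxJ : ∀ j : ℕ, x ∈ J j := by
    intro j
    have h1 : (0:ℝ) < 2 ^ j * L := by positivity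
    exact ⟨by linarith [hx.1], by linarith [hx.2]⟩
  -- pointwise bound on the annuli
  have hw : ∀ j : ℕ, ∀ y ∈ D j, ‖Φ y‖ ≤ 4 * A / (4 ^ j * Real.sqrt L) := by
    intro j y hy
    have hd0 : 0 ≤ Metric.infDist y (Icc lo (lo + L)) := Metric.infDist_nonneg
    cases j with
    | zero =>
        refine (hΦ y).trans ?_
        have h1 : Real.sqrt L * 1 ≤
            Real.sqrt L * (1 + Metric.infDist y (Icc lo (lo + L)) / L) ^ 2 := by
          have : (1:ℝ) ≤ (1 + Metric.infDist y (Icc lo (lo + L)) / L) ^ 2 := by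
            have : (0:ℝ) ≤ Metric.infDist y (Icc lo (lo + L)) / L := by positivity
            nlinarith
          nlinarith
        have h2 : A / (Real.sqrt L * (1 + Metric.infDist y (Icc lo (lo + L)) / L) ^ 2)
            ≤ A / (Real.sqrt L * 1) :=
          div_le_div_of_nonneg_left hA (by linarith) h1
        calc A / (Real.sqrt L * (1 + Metric.infDist y (Icc lo (lo + L)) / L) ^ 2)
            ≤ A / (Real.sqrt L * 1) := h2
          _ ≤ 4 * A / (4 ^ 0 * Real.sqrt L) := by
              rw [mul_one, pow_zero, one_mul, div_le_div_iff₀ hsL hsL]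
              nlinarith
    | succ m =>
        have hyJ : y ∉ J m := hy.2
        have hdist : ∀ z ∈ Icc lo (lo + L), 2 ^ m * L ≤ dist y z := by
          intro z hz
          have hz1 := hz.1
          have hz2 := hz.2
          rw [Real.dist_eq]
          rcases not_and_or.mp (fun hc : lo - 2^m*L ≤ y ∧ y ≤ lo + L + 2^m*L => hyJ ⟨hc.1, hc.2⟩) with h | h
          · push_neg at h
            have : z - y ≤ |y - z| := by
              rw [abs_sub_comm]; exact le_abs_self _
            linarith
          · push_neg at h
            have : y - z ≤ |y - z| := le_abs_self _
            linarith
        have hdge : 2 ^ m * L ≤ Metric.infDist y (Icc lo (lo + L)) := by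
          by_contra hc
          push_neg at hc
          obtain ⟨z, hz, hzd⟩ := (Metric.infDist_lt_iff hIne).mp hc
          exact absurd (hdist z hz) (not_le.mpr hzd)
        have h2m : (2:ℝ) ^ m ≤ 1 + Metric.infDist y (Icc lo (lo + L)) / L := by
          have := (le_div_iff₀ hL).mpr (by linarith : (2:ℝ)^m * L ≤ Metric.infDist y (Icc lo (lo + L)))
          linarith
        have h4m : (4:ℝ) ^ m ≤ (1 + Metric.infDist y (Icc lo (lo + L)) / L) ^ 2 := by
          have h2 : (0:ℝ) ≤ (2:ℝ)^m := by positivity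
          calc (4:ℝ) ^ m = ((2:ℝ)^m)^2 := by
                rw [← pow_mul, pow_mul']; norm_num
            _ ≤ (1 + Metric.infDist y (Icc lo (lo + L)) / L) ^ 2 := by
                apply pow_le_pow_left₀ h2 h2m
        refine (hΦ y).trans ?_
        have h1 : Real.sqrt L * 4 ^ m ≤
            Real.sqrt L * (1 + Metric.infDist y (Icc lo (lo + L)) / L) ^ 2 := by
          exact mul_le_mul_of_nonneg_left h4m hsL.le
        have h4mpos : (0:ℝ) < (4:ℝ)^m := by positivity
        calc A / (Real.sqrt L * (1 + Metric.infDist y (Icc lo (lo + L)) / L) ^ 2)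
            ≤ A / (Real.sqrt L * 4 ^ m) := div_le_div_of_nonneg_left hA (by positivity) h1
          _ = 4 * A / (4 ^ (m+1) * Real.sqrt L) := by
              rw [pow_succ]
              field_simp
  -- per-annulus integral bound
  have hann : ∀ j : ℕ, (∫⁻ y in D j, ENNReal.ofReal ‖f y‖ * ENNReal.ofReal ‖Φ y‖)
      ≤ ENNReal.ofReal (16 * A * Real.sqrt L * (1/2 : ℝ) ^ j) * HLM f x := by
    intro j
    have hc : (0:ℝ) ≤ 4 * A / (4 ^ j * Real.sqrt L) := by positivity
    have hblen : lo - 2 ^ j * L < lo + L + 2 ^ j * L := by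
      have : (0:ℝ) < 2 ^ j * L := by positivity
      linarith
    calc (∫⁻ y in D j, ENNReal.ofReal ‖f y‖ * ENNReal.ofReal ‖Φ y‖)
        ≤ ∫⁻ y in D j, ENNReal.ofReal (4 * A / (4 ^ j * Real.sqrt L)) * ENNReal.ofReal ‖f y‖ := by
          refine setLIntegral_mono' (hDmeas j) ?_
          intro y hy
          rw [mul_comm]
          exact mul_le_mul_left (ENNReal.ofReal_le_ofReal (hw j y hy)) _
      _ = ENNReal.ofReal (4 * A / (4 ^ j * Real.sqrt L)) * ∫⁻ y in D j, ENNReal.ofReal ‖f y‖ :=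
          lintegral_const_mul' _ _ ENNReal.ofReal_ne_top
      _ ≤ ENNReal.ofReal (4 * A / (4 ^ j * Real.sqrt L)) * ∫⁻ y in J j, ENNReal.ofReal ‖f y‖ :=
          mul_le_mul_right (lintegral_mono_set (hDJ j)) _
      _ ≤ ENNReal.ofReal (4 * A / (4 ^ j * Real.sqrt L)) *
            (ENNReal.ofReal ((lo + L + 2 ^ j * L) - (lo - 2 ^ j * L)) * HLM f x) :=
          mul_le_mul_right (hlm_avg f hf hblen (hxJ j)) _
      _ = ENNReal.ofReal (4 * A / (4 ^ j * Real.sqrt L) * ((lo + L + 2 ^ j * L) - (lo - 2 ^ j * L)))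
            * HLM f x := by
          rw [← mul_assoc, ← ENNReal.ofReal_mul hc]
      _ ≤ ENNReal.ofReal (16 * A * Real.sqrt L * (1/2 : ℝ) ^ j) * HLM f x := by
          refine mul_le_mul_left (ENNReal.ofReal_le_ofReal ?_) _
          have hs : (1:ℝ) ≤ (2:ℝ) ^ j := one_le_pow₀ (by norm_num)
          have h2pos : (0:ℝ) < (2:ℝ) ^ j := by positivity
          have h4 : (4:ℝ) ^ j = ((2:ℝ) ^ j) ^ 2 := by
            rw [← pow_mul, pow_mul']; norm_num
          have hhalf : (1/2 : ℝ) ^ j = ((2:ℝ) ^ j)⁻¹ := by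
            rw [one_div, inv_pow]
          rw [div_mul_eq_mul_div, div_le_iff₀ (by positivity)]
          have hrhs : 16 * A * Real.sqrt L * (1/2:ℝ) ^ j * (4 ^ j * Real.sqrt L)
              = 16 * A * L * (2:ℝ) ^ j := by
            rw [h4, hhalf]
            have hc : ((2:ℝ) ^ j)⁻¹ * ((2:ℝ) ^ j) ^ 2 = (2:ℝ) ^ j := by
              rw [pow_two, ← mul_assoc, inv_mul_cancel₀ (ne_of_gt h2pos), one_mul]
            calc 16 * A * Real.sqrt L * ((2:ℝ)^j)⁻¹ * (((2:ℝ)^j)^2 * Real.sqrt L)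
                = 16 * A * (Real.sqrt L * Real.sqrt L) * (((2:ℝ)^j)⁻¹ * ((2:ℝ)^j)^2) := by ring
              _ = 16 * A * L * (2:ℝ)^j := by rw [hL2, hc]
          rw [hrhs]
          nlinarith [mul_nonneg (mul_nonneg hA hL.le) (by linarith : (0:ℝ) ≤ 2 * (2:ℝ)^j - 1)]
  -- geometric series
  have hgeo : (∑' j : ℕ, ENNReal.ofReal (16 * A * Real.sqrt L * (1/2 : ℝ) ^ j))
      = ENNReal.ofReal (32 * A * Real.sqrt L) := by
    have h1 : ∀ j : ℕ, ENNReal.ofReal (16 * A * Real.sqrt L * (1/2 : ℝ) ^ j)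
        = ENNReal.ofReal (16 * A * Real.sqrt L) * (1/2 : ℝ≥0∞) ^ j := by
      intro j
      rw [ENNReal.ofReal_mul (by positivity), ENNReal.ofReal_pow (by norm_num)]
      congr 1
      rw [ENNReal.ofReal_div_of_pos (by norm_num)]
      norm_num
    simp_rw [h1]
    rw [ENNReal.tsum_mul_left, ENNReal.tsum_geometric]
    have h2 : ((1:ℝ≥0∞) - 1/2)⁻¹ = 2 := by
      have := ENNReal.sub_half (a := 1) ENNReal.one_ne_top
      rw [this, one_div, inv_inv]
    rw [h2, ← ENNReal.ofReal_ofNat 2, ← ENNReal.ofReal_mul (by positivity)]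
    congr 1
    ring
  -- combine
  calc ENNReal.ofReal ‖pair f Φ‖
      ≤ ∫⁻ y, ENNReal.ofReal ‖f y‖ * ENNReal.ofReal ‖Φ y‖ := step1
    _ = ∫⁻ y in univ, ENNReal.ofReal ‖f y‖ * ENNReal.ofReal ‖Φ y‖ :=
        (setLIntegral_univ _).symm
    _ = ∫⁻ y in ⋃ j, D j, ENNReal.ofReal ‖f y‖ * ENNReal.ofReal ‖Φ y‖ := by rw [hUnion]
    _ ≤ ∑' j : ℕ, ∫⁻ y in D j, ENNReal.ofReal ‖f y‖ * ENNReal.ofReal ‖Φ y‖ :=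
        lintegral_iUnion_le _ _
    _ ≤ ∑' j : ℕ, ENNReal.ofReal (16 * A * Real.sqrt L * (1/2 : ℝ) ^ j) * HLM f x :=
        ENNReal.tsum_le_tsum hann
    _ = (∑' j : ℕ, ENNReal.ofReal (16 * A * Real.sqrt L * (1/2 : ℝ) ^ j)) * HLM f x :=
        ENNReal.tsum_mul_right
    _ = ENNReal.ofReal (32 * A * Real.sqrt L) * HLM f x := by rw [hgeo]

/-- the pointwise bump bound derived from `IsNormBump`, in the form used by `key_bound`. -/
lemma bump_pointwise (Cb : ℕ → ℕ → ℝ) (p : ℤ × ℤ) (Φp : ℝ → ℂ)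
    (hb : IsNormBump Cb (dyadCenter p) (dyadLen p) Φp) (y : ℝ) :
    ‖Φp y‖ ≤ Cb 0 2 / (Real.sqrt (dyadLen p) *
      (1 + Metric.infDist y (Icc ((2:ℝ) ^ p.1 * (p.2 : ℝ)) ((2:ℝ) ^ p.1 * (p.2 : ℝ) + dyadLen p)) / dyadLen p) ^ 2) := by
  have hL : 0 < dyadLen p := by
    have : (0:ℝ) < (2:ℝ) ^ p.1 := zpow_pos (by norm_num) _
    simpa [dyadLen] using this
  have hs : 0 < Real.sqrt (dyadLen p) := Real.sqrt_pos.mpr hL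
  obtain ⟨-, h⟩ := hb
  have h2 := h 0 2 y
  rw [iteratedDeriv_zero] at h2
  have hIcc : Set.Icc (dyadCenter p - dyadLen p / 2) (dyadCenter p + dyadLen p / 2)
      = Icc ((2:ℝ) ^ p.1 * (p.2 : ℝ)) ((2:ℝ) ^ p.1 * (p.2 : ℝ) + dyadLen p) := by
    unfold dyadCenter dyadLen
    congr 1 <;> ring
  rw [hIcc, pow_zero, one_mul] at h2
  have hnorm : ‖((Real.sqrt (dyadLen p) : ℝ) : ℂ) * Φp y‖
      = Real.sqrt (dyadLen p) * ‖Φp y‖ := by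
    rw [norm_mul, Complex.norm_real, Real.norm_eq_abs, abs_of_nonneg (Real.sqrt_nonneg _)]
  rw [hnorm] at h2
  set d := Metric.infDist y (Icc ((2:ℝ) ^ p.1 * (p.2 : ℝ)) ((2:ℝ) ^ p.1 * (p.2 : ℝ) + dyadLen p))
  have hd : 0 ≤ d := Metric.infDist_nonneg
  have hXpos : (0:ℝ) < (1 + d / dyadLen p) ^ 2 := by positivity
  rw [le_div_iff₀ (by positivity)]
  have h3 := (le_div_iff₀ hXpos).mp h2
  nlinarith

/-- pointwise domination of the paraproduct sum by `M(f₁) S(f₂) S(f₃)`. -/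
theorem paraproduct_pointwise_domination (Cb : ℕ → ℕ → ℝ) :
    ∃ C : ℝ, 0 < C ∧
      ∀ (𝒟 : Finset (ℤ × ℤ)) (Φ : Fin 3 → ℤ × ℤ → ℝ → ℂ) (f : Fin 3 → ℝ → ℂ),
        (∀ i : Fin 3, ∀ p ∈ 𝒟, IsNormBump Cb (dyadCenter p) (dyadLen p) (Φ i p)) →
        (∀ p ∈ 𝒟, (∫ x : ℝ, Φ 1 p x) = 0) →
        (∀ p ∈ 𝒟, (∫ x : ℝ, Φ 2 p x) = 0) →
        (∀ i : Fin 3, MeasureTheory.LocallyIntegrable (f i) MeasureTheory.volume) →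
        ∀ᵐ x : ℝ,
          ENNReal.ofReal (∑ p ∈ 𝒟, dyadLen p ^ ((-3 : ℝ) / 2) *
              (‖pair (f 0) (Φ 0 p)‖ * ‖pair (f 1) (Φ 1 p)‖ * ‖pair (f 2) (Φ 2 p)‖) *
              Set.indicator (dyadIcc p) (fun _ => (1 : ℝ)) x)
            ≤ ENNReal.ofReal C * HLM (f 0) x *
                ENNReal.ofReal (Sq 𝒟 (Φ 1) (f 1) x) * ENNReal.ofReal (Sq 𝒟 (Φ 2) (f 2) x) := by
  refine ⟨32 * |Cb 0 2| + 1, by positivity, ?_⟩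
  set C : ℝ := 32 * |Cb 0 2| + 1 with hC
  have hCpos : 0 < C := by positivity
  intro 𝒟 Φ f hbump _ _ hloc
  refine Filter.Eventually.of_forall (fun x => ?_)
  -- basic facts about dyadic intervals
  have hLpos : ∀ p : ℤ × ℤ, 0 < dyadLen p := fun p => by
    have : (0:ℝ) < (2:ℝ) ^ p.1 := zpow_pos (by norm_num) _
    simpa [dyadLen] using this
  have hspos : ∀ p : ℤ × ℤ, 0 < Real.sqrt (dyadLen p) := fun p => Real.sqrt_pos.mpr (hLpos p)
  set ind : ℤ × ℤ → ℝ := fun p => Set.indicator (dyadIcc p) (fun _ => (1 : ℝ)) x with hind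
  have hind01 : ∀ p, ind p = 0 ∨ ind p = 1 := by
    intro p
    by_cases h : x ∈ dyadIcc p
    · right; simp [hind, Set.indicator_of_mem h]
    · left; simp [hind, Set.indicator_of_notMem h]
  have hindnn : ∀ p, 0 ≤ ind p := fun p => (hind01 p).elim (fun h => h.ge) (fun h => by rw [h]; norm_num)
  -- the primed quantities
  set a' : ℤ × ℤ → ℝ := fun p => ‖pair (f 0) (Φ 0 p)‖ / Real.sqrt (dyadLen p) * ind p with ha'
  set b' : ℤ × ℤ → ℝ := fun p => ‖pair (f 1) (Φ 1 p)‖ / Real.sqrt (dyadLen p) * ind p with hb'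
  set c' : ℤ × ℤ → ℝ := fun p => ‖pair (f 2) (Φ 2 p)‖ / Real.sqrt (dyadLen p) * ind p with hc'
  have ha'nn : ∀ p, 0 ≤ a' p := fun p => mul_nonneg (div_nonneg (norm_nonneg _) (Real.sqrt_nonneg _)) (hindnn p)
  have hb'nn : ∀ p, 0 ≤ b' p := fun p => mul_nonneg (div_nonneg (norm_nonneg _) (Real.sqrt_nonneg _)) (hindnn p)
  have hc'nn : ∀ p, 0 ≤ c' p := fun p => mul_nonneg (div_nonneg (norm_nonneg _) (Real.sqrt_nonneg _)) (hindnn p)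
  -- Step A : term identity
  have hterm : ∀ p : ℤ × ℤ, dyadLen p ^ ((-3 : ℝ) / 2) *
      (‖pair (f 0) (Φ 0 p)‖ * ‖pair (f 1) (Φ 1 p)‖ * ‖pair (f 2) (Φ 2 p)‖) * ind p
      = a' p * b' p * c' p := by
    intro p
    have hL := hLpos p
    have hs := hspos p
    have hL32 : dyadLen p ^ ((-3 : ℝ) / 2)
        = (Real.sqrt (dyadLen p))⁻¹ * (Real.sqrt (dyadLen p))⁻¹ * (Real.sqrt (dyadLen p))⁻¹ := by
      have h1 : dyadLen p ^ ((-3 : ℝ) / 2) = (dyadLen p ^ ((1 : ℝ)/2)) ^ (-3 : ℝ) := by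
        rw [← Real.rpow_mul hL.le]
        norm_num
      rw [h1, ← Real.sqrt_eq_rpow, Real.rpow_neg (Real.sqrt_nonneg _)]
      have : ((3:ℝ)) = ((3:ℕ):ℝ) := by norm_num
      rw [this, Real.rpow_natCast]
      rw [← inv_pow]
      ring
    rcases hind01 p with h | h
    · rw [h]
      all_goals simp [ha', hb', hc', h]
    · rw [h, hL32]
      simp only [ha', hb', hc', h, mul_one]
      field_simp
      try ring
  -- Step D : maximal function bound
  have hstepD : ∀ p ∈ 𝒟, ENNReal.ofReal (a' p) ≤ ENNReal.ofReal C * HLM (f 0) x := by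
    intro p hp
    rcases hind01 p with h | h
    · simp only [ha', h, mul_zero, ENNReal.ofReal_zero]
      exact zero_le
    · have hxmem : x ∈ dyadIcc p := by
        by_contra hc
        simp [hind, Set.indicator_of_notMem hc] at h
      set lo : ℝ := (2:ℝ) ^ p.1 * (p.2 : ℝ) with hlo
      have hIccEq : dyadIcc p = Icc lo (lo + dyadLen p) := by
        unfold dyadIcc dyadLen
        congr 1
        ring
      have hxmem' : x ∈ Icc lo (lo + dyadLen p) := hIccEq ▸ hxmem
      have hΦb := bump_pointwise Cb p (Φ 0 p) (hbump 0 p hp)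
      have hkey := key_bound (Cb 0 2) (dyadLen p) lo (hLpos p) (f 0) (Φ 0 p) (hloc 0)
        (fun y => hΦb y) hxmem'
      -- from ofReal a ≤ ofReal (32 A s) * HLM  conclude  ofReal (a/s) ≤ ofReal C * HLM
      have hs := hspos p
      simp only [ha', h, mul_one]
      rw [ENNReal.ofReal_div_of_pos hs]
      rw [ENNReal.div_le_iff (ENNReal.ofReal_pos.mpr hs).ne' ENNReal.ofReal_ne_top]
      calc ENNReal.ofReal ‖pair (f 0) (Φ 0 p)‖
          ≤ ENNReal.ofReal (32 * Cb 0 2 * Real.sqrt (dyadLen p)) * HLM (f 0) x := hkey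
        _ ≤ ENNReal.ofReal (C * Real.sqrt (dyadLen p)) * HLM (f 0) x := by
            refine mul_le_mul_left (ENNReal.ofReal_le_ofReal ?_) _
            have : Cb 0 2 ≤ |Cb 0 2| := le_abs_self _
            nlinarith [hs.le, abs_nonneg (Cb 0 2)]
        _ = ENNReal.ofReal C * HLM (f 0) x * ENNReal.ofReal (Real.sqrt (dyadLen p)) := by
            rw [ENNReal.ofReal_mul hCpos.le]
            ring
  -- Step F : Cauchy–Schwarz
  have hCS : ∑ p ∈ 𝒟, b' p * c' p ≤ Sq 𝒟 (Φ 1) (f 1) x * Sq 𝒟 (Φ 2) (f 2) x := by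
    have hsq : ∀ (g : ℝ → ℂ) (Ψ : ℤ × ℤ → ℝ → ℂ),
        ∑ p ∈ 𝒟, (‖pair g (Ψ p)‖ / Real.sqrt (dyadLen p) * ind p) ^ 2
        = ∑ p ∈ 𝒟, ‖pair g (Ψ p)‖ ^ 2 / dyadLen p * ind p := by
      intro g Ψ
      refine Finset.sum_congr rfl fun p _ => ?_
      have hL := hLpos p
      have h2 : Real.sqrt (dyadLen p) ^ 2 = dyadLen p := Real.sq_sqrt hL.le
      rcases hind01 p with h | h <;> rw [h]
      · ring
      · rw [mul_one, mul_one, div_pow, h2]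
    have hb2 : Real.sqrt (∑ p ∈ 𝒟, b' p ^ 2) = Sq 𝒟 (Φ 1) (f 1) x := by
      rw [Sq, hsq (f 1) (Φ 1)]
    have hc2 : Real.sqrt (∑ p ∈ 𝒟, c' p ^ 2) = Sq 𝒟 (Φ 2) (f 2) x := by
      rw [Sq, hsq (f 2) (Φ 2)]
    have hcs := Finset.sum_mul_sq_le_sq_mul_sq 𝒟 b' c'
    have hnn : 0 ≤ ∑ p ∈ 𝒟, b' p * c' p :=
      Finset.sum_nonneg fun p _ => mul_nonneg (hb'nn p) (hc'nn p)
    calc ∑ p ∈ 𝒟, b' p * c' p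
        = Real.sqrt ((∑ p ∈ 𝒟, b' p * c' p) ^ 2) := (Real.sqrt_sq hnn).symm
      _ ≤ Real.sqrt ((∑ p ∈ 𝒟, b' p ^ 2) * ∑ p ∈ 𝒟, c' p ^ 2) := Real.sqrt_le_sqrt hcs
      _ = Real.sqrt (∑ p ∈ 𝒟, b' p ^ 2) * Real.sqrt (∑ p ∈ 𝒟, c' p ^ 2) :=
          Real.sqrt_mul (Finset.sum_nonneg fun p _ => sq_nonneg _) _
      _ = Sq 𝒟 (Φ 1) (f 1) x * Sq 𝒟 (Φ 2) (f 2) x := by rw [hb2, hc2]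
  -- assemble
  have hterm_nn : ∀ p ∈ 𝒟, 0 ≤ dyadLen p ^ ((-3 : ℝ) / 2) *
      (‖pair (f 0) (Φ 0 p)‖ * ‖pair (f 1) (Φ 1 p)‖ * ‖pair (f 2) (Φ 2 p)‖) * ind p := by
    intro p _
    have := hindnn p
    have h1 : (0:ℝ) ≤ dyadLen p ^ ((-3 : ℝ) / 2) := Real.rpow_nonneg (hLpos p).le _
    positivity
  calc ENNReal.ofReal (∑ p ∈ 𝒟, dyadLen p ^ ((-3 : ℝ) / 2) *
          (‖pair (f 0) (Φ 0 p)‖ * ‖pair (f 1) (Φ 1 p)‖ * ‖pair (f 2) (Φ 2 p)‖) * ind p)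
      = ∑ p ∈ 𝒟, ENNReal.ofReal (a' p * b' p * c' p) := by
        rw [ENNReal.ofReal_sum_of_nonneg hterm_nn]
        exact Finset.sum_congr rfl fun p _ => by rw [hterm p]
    _ = ∑ p ∈ 𝒟, ENNReal.ofReal (a' p) * (ENNReal.ofReal (b' p) * ENNReal.ofReal (c' p)) := by
        refine Finset.sum_congr rfl fun p _ => ?_
        rw [ENNReal.ofReal_mul (mul_nonneg (ha'nn p) (hb'nn p)),
          ENNReal.ofReal_mul (ha'nn p), mul_assoc]
    _ ≤ ∑ p ∈ 𝒟, (ENNReal.ofReal C * HLM (f 0) x) * (ENNReal.ofReal (b' p) * ENNReal.ofReal (c' p)) := by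
        refine Finset.sum_le_sum fun p hp => ?_
        exact mul_le_mul_left (hstepD p hp) _
    _ = (ENNReal.ofReal C * HLM (f 0) x) * ∑ p ∈ 𝒟, ENNReal.ofReal (b' p) * ENNReal.ofReal (c' p) := by
        rw [Finset.mul_sum]
    _ = (ENNReal.ofReal C * HLM (f 0) x) * ENNReal.ofReal (∑ p ∈ 𝒟, b' p * c' p) := by
        congr 1
        rw [ENNReal.ofReal_sum_of_nonneg (fun p _ => mul_nonneg (hb'nn p) (hc'nn p))]
        exact Finset.sum_congr rfl fun p _ => (ENNReal.ofReal_mul (hb'nn p)).symm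
    _ ≤ (ENNReal.ofReal C * HLM (f 0) x) *
          ENNReal.ofReal (Sq 𝒟 (Φ 1) (f 1) x * Sq 𝒟 (Φ 2) (f 2) x) :=
        mul_le_mul_right (ENNReal.ofReal_le_ofReal hCS) _
    _ = ENNReal.ofReal C * HLM (f 0) x *
          ENNReal.ofReal (Sq 𝒟 (Φ 1) (f 1) x) * ENNReal.ofReal (Sq 𝒟 (Φ 2) (f 2) x) := by
        have hSqnn : 0 ≤ Sq 𝒟 (Φ 1) (f 1) x := Real.sqrt_nonneg _
        rw [ENNReal.ofReal_mul hSqnn]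
        ring
end
end

section
/- For the bi-parameter paraproduct trilinear form Λ^{(1,2)}(f₁,f₂,f₃) = Σ_{R∈𝒟} |R|^{-1/2} ⟨f₁,Φ¹_R⟩⟨f₂,Φ²_R⟩⟨f₃,Φ³_R⟩ over a finite family 𝒟 of dyadic rectangles, one has |Λ^{(1,2)}(f₁,f₂,f₃)| ≲ ∫_{ℝ²} MS(f₁)(x,y) SM(f₂)(x,y) SS(f₃)(x,y) dx dy. -/
open MeasureTheory Set
open scoped ENNReal

noncomputable section

/-! ### Auxiliary lemmas -/

lemma dyadLen_pos (p : ℤ × ℤ) : 0 < dyadLen p := zpow_pos (by norm_num) _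

lemma indE_cases (p : ℤ × ℤ) (x : ℝ) : indE p x = 0 ∨ indE p x = 1 := by
  unfold indE Set.indicator
  split <;> simp

lemma indE_rpow_half (p : ℤ × ℤ) (x : ℝ) : indE p x ^ (1/2 : ℝ) = indE p x := by
  rcases indE_cases p x with h | h <;> rw [h]
  · rw [ENNReal.zero_rpow_of_pos (by norm_num)]
  · rw [ENNReal.one_rpow]

lemma measurable_indE (p : ℤ × ℤ) : Measurable (indE p) :=
  measurable_const.indicator measurableSet_Icc

lemma volume_dyadIcc (p : ℤ × ℤ) : volume (dyadIcc p) = ENNReal.ofReal (dyadLen p) := by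
  rw [dyadIcc, Real.volume_Icc]
  congr 1
  unfold dyadLen
  ring

lemma indE_prod (p p' : ℤ × ℤ) (z : ℝ × ℝ) :
    indE p z.1 * indE p' z.2
      = Set.indicator (dyadIcc p ×ˢ dyadIcc p') (fun _ => (1 : ℝ≥0∞)) z := by
  unfold indE Set.indicator
  by_cases h1 : z.1 ∈ dyadIcc p <;> by_cases h2 : z.2 ∈ dyadIcc p' <;>
    simp [Set.mem_prod, h1, h2]

lemma mul_ind {α : Type*} (s : Set α) (K : ℝ≥0∞) (z : α) :
    K * Set.indicator s (fun _ => (1 : ℝ≥0∞)) z = Set.indicator s (fun _ => K) z := by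
  unfold Set.indicator
  split <;> simp

/-- Cauchy–Schwarz for `ℝ≥0∞` sums, in square-root form. -/
lemma enn_cs {ι : Type*} (s : Finset ι) (f g : ι → ℝ≥0∞) :
    ∑ i ∈ s, f i ^ (1/2 : ℝ) * g i ^ (1/2 : ℝ) ≤
      (∑ i ∈ s, f i) ^ (1/2 : ℝ) * (∑ i ∈ s, g i) ^ (1/2 : ℝ) := by
  rcases eq_or_ne (∑ i ∈ s, f i) 0 with h0 | hf0
  · have hz : ∀ i ∈ s, f i = 0 := fun i hi => (Finset.sum_eq_zero_iff.1 h0) i hi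
    rw [Finset.sum_eq_zero]
    · exact zero_le
    intro i hi
    rw [hz i hi, ENNReal.zero_rpow_of_pos (by norm_num), zero_mul]
  rcases eq_or_ne (∑ i ∈ s, g i) 0 with h0 | hg0
  · have hz : ∀ i ∈ s, g i = 0 := fun i hi => (Finset.sum_eq_zero_iff.1 h0) i hi
    rw [Finset.sum_eq_zero]
    · exact zero_le
    intro i hi
    rw [hz i hi, ENNReal.zero_rpow_of_pos (by norm_num), mul_zero]
  rcases eq_or_ne (∑ i ∈ s, f i) ⊤ with htop | hft
  · rw [htop, ENNReal.top_rpow_of_pos (by norm_num), ENNReal.top_mul]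
    · exact le_top
    · simp [ENNReal.rpow_eq_zero_iff, hg0]
  rcases eq_or_ne (∑ i ∈ s, g i) ⊤ with htop | hgt
  · rw [htop, ENNReal.top_rpow_of_pos (by norm_num), ENNReal.mul_top]
    · exact le_top
    · simp [ENNReal.rpow_eq_zero_iff, hf0]
  · have hfi : ∀ i ∈ s, f i ≠ ⊤ := fun i hi =>
      ne_top_of_le_ne_top hft (Finset.single_le_sum (fun _ _ => zero_le) hi)
    have hgi : ∀ i ∈ s, g i ≠ ⊤ := fun i hi =>
      ne_top_of_le_ne_top hgt (Finset.single_le_sum (fun _ _ => zero_le) hi)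
    calc ∑ i ∈ s, f i ^ (1/2 : ℝ) * g i ^ (1/2 : ℝ)
        = ∑ i ∈ s, ((NNReal.sqrt (f i).toNNReal * NNReal.sqrt (g i).toNNReal : NNReal) : ℝ≥0∞) := by
          refine Finset.sum_congr rfl fun i hi => ?_
          rw [ENNReal.coe_mul, NNReal.sqrt_eq_rpow, NNReal.sqrt_eq_rpow,
            ENNReal.coe_rpow_of_nonneg _ (by norm_num),
            ENNReal.coe_rpow_of_nonneg _ (by norm_num),
            ENNReal.coe_toNNReal (hfi i hi), ENNReal.coe_toNNReal (hgi i hi)]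
      _ = ((∑ i ∈ s, NNReal.sqrt (f i).toNNReal * NNReal.sqrt (g i).toNNReal : NNReal) : ℝ≥0∞) := by
          rw [ENNReal.coe_finset_sum]
      _ ≤ ((NNReal.sqrt (∑ i ∈ s, (f i).toNNReal) * NNReal.sqrt (∑ i ∈ s, (g i).toNNReal) :
            NNReal) : ℝ≥0∞) :=
          ENNReal.coe_le_coe.2 (NNReal.sum_sqrt_mul_sqrt_le s _ _)
      _ = (∑ i ∈ s, f i) ^ (1/2 : ℝ) * (∑ i ∈ s, g i) ^ (1/2 : ℝ) := by
          rw [ENNReal.coe_mul, NNReal.sqrt_eq_rpow, NNReal.sqrt_eq_rpow,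
            ENNReal.coe_rpow_of_nonneg _ (by norm_num),
            ENNReal.coe_rpow_of_nonneg _ (by norm_num),
            ENNReal.coe_finset_sum, ENNReal.coe_finset_sum]
          congr 2 <;> refine Finset.sum_congr rfl fun i hi => ?_
          · exact ENNReal.coe_toNNReal (hfi i hi)
          · exact ENNReal.coe_toNNReal (hgi i hi)

/-- the elementary `ℝ≥0∞`-valued square term used in the square functions. -/
def sqT (r : ℝ) (q : (ℤ × ℤ) × (ℤ × ℤ)) (z : ℝ × ℝ) : ℝ≥0∞ :=
  ENNReal.ofReal (r ^ 2 / (dyadLen q.1 * dyadLen q.2)) * indE q.1 z.1 * indE q.2 z.2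

lemma measurable_sqT (r : ℝ) (q : (ℤ × ℤ) × (ℤ × ℤ)) : Measurable (sqT r q) :=
  ((measurable_const.mul ((measurable_indE q.1).comp measurable_fst)).mul
    ((measurable_indE q.2).comp measurable_snd))

lemma sqT_rpow_half (r : ℝ) (hr : 0 ≤ r) (q : (ℤ × ℤ) × (ℤ × ℤ)) (z : ℝ × ℝ) :
    sqT r q z ^ (1/2 : ℝ)
      = ENNReal.ofReal (r / Real.sqrt (dyadLen q.1 * dyadLen q.2))
          * indE q.1 z.1 * indE q.2 z.2 := by
  have hL : (0:ℝ) < dyadLen q.1 * dyadLen q.2 :=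
    mul_pos (dyadLen_pos q.1) (dyadLen_pos q.2)
  unfold sqT
  rw [ENNReal.mul_rpow_of_nonneg _ _ (by norm_num), ENNReal.mul_rpow_of_nonneg _ _ (by norm_num),
    indE_rpow_half, indE_rpow_half, ENNReal.ofReal_rpow_of_nonneg (by positivity) (by norm_num)]
  congr 2
  rw [← Real.sqrt_eq_rpow, Real.sqrt_div (sq_nonneg r), Real.sqrt_sq hr]

lemma ofReal_div_len (t : ℝ) (p p' : ℤ × ℤ) :
    ENNReal.ofReal (t / (dyadLen p * dyadLen p'))
      = ENNReal.ofReal (t / dyadLen p') * (ENNReal.ofReal (dyadLen p))⁻¹ := by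
  have h1 := dyadLen_pos p
  have h2 := dyadLen_pos p'
  rw [← ENNReal.ofReal_inv_of_pos h1, ← ENNReal.ofReal_mul' (by positivity)]
  congr 1
  rw [mul_comm (dyadLen p) (dyadLen p'), ← div_div, div_eq_mul_inv]

lemma measurableSet_dyadIcc (p : ℤ × ℤ) : MeasurableSet (dyadIcc p) := measurableSet_Icc

lemma lintegral_triple (r₁ r₂ r₃ : ℝ) (h₁ : 0 ≤ r₁) (h₂ : 0 ≤ r₂) (h₃ : 0 ≤ r₃)
    (q : (ℤ × ℤ) × (ℤ × ℤ)) :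
    ∫⁻ z : ℝ × ℝ, sqT r₁ q z ^ (1/2 : ℝ) * sqT r₂ q z ^ (1/2 : ℝ) * sqT r₃ q z ^ (1/2 : ℝ)
      = ENNReal.ofReal ((dyadLen q.1 * dyadLen q.2) ^ (-(1:ℝ)/2) * (r₁ * r₂ * r₃)) := by
  have hL : (0:ℝ) < dyadLen q.1 * dyadLen q.2 :=
    mul_pos (dyadLen_pos q.1) (dyadLen_pos q.2)
  set L : ℝ := dyadLen q.1 * dyadLen q.2 with hLdef
  have hsL : (0:ℝ) < Real.sqrt L := Real.sqrt_pos.2 hL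
  have hpt : ∀ z : ℝ × ℝ,
      sqT r₁ q z ^ (1/2 : ℝ) * sqT r₂ q z ^ (1/2 : ℝ) * sqT r₃ q z ^ (1/2 : ℝ)
        = Set.indicator (dyadIcc q.1 ×ˢ dyadIcc q.2)
            (fun _ => ENNReal.ofReal (r₁ / Real.sqrt L) * ENNReal.ofReal (r₂ / Real.sqrt L) *
              ENNReal.ofReal (r₃ / Real.sqrt L)) z := by
    intro z
    rw [sqT_rpow_half _ h₁, sqT_rpow_half _ h₂, sqT_rpow_half _ h₃, ← mul_ind, ← indE_prod]
    rcases indE_cases q.1 z.1 with hh | hh <;> rcases indE_cases q.2 z.2 with hh2 | hh2 <;>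
      rw [hh, hh2] <;> ring
  rw [lintegral_congr hpt,
    lintegral_indicator_const ((measurableSet_dyadIcc q.1).prod (measurableSet_dyadIcc q.2)),
    Measure.volume_eq_prod, Measure.prod_prod, volume_dyadIcc, volume_dyadIcc,
    ← ENNReal.ofReal_mul (dyadLen_pos q.1).le,
    ← ENNReal.ofReal_mul (by positivity), ← ENNReal.ofReal_mul (by positivity),
    ← ENNReal.ofReal_mul (by positivity)]
  congr 1
  have hss : Real.sqrt L * Real.sqrt L = L := Real.mul_self_sqrt hL.le
  have hrp : L ^ (-(1:ℝ)/2) = (Real.sqrt L)⁻¹ := by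
    rw [show (-(1:ℝ))/2 = -(1/2 : ℝ) by norm_num, Real.rpow_neg hL.le, ← Real.sqrt_eq_rpow]
  rw [hrp]
  field_simp
  ring_nf
  rw [Real.sq_sqrt hL.le, hLdef]
  ring

lemma pointwise_bound (𝒟 : Finset ((ℤ × ℤ) × (ℤ × ℤ)))
    (Φ1I Φ1J Φ2I Φ2J Φ3I Φ3J : ℤ × ℤ → ℝ → ℂ) (f₁ f₂ f₃ : ℝ × ℝ → ℂ) (z : ℝ × ℝ) :
    ∑ q ∈ 𝒟, sqT ‖pair2 f₁ (Φ1I q.1) (Φ1J q.2)‖ q z ^ (1/2 : ℝ)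
        * sqT ‖pair2 f₂ (Φ2I q.1) (Φ2J q.2)‖ q z ^ (1/2 : ℝ)
        * sqT ‖pair2 f₃ (Φ3I q.1) (Φ3J q.2)‖ q z ^ (1/2 : ℝ)
      ≤ MSfun0 𝒟 Φ1I Φ1J f₁ z * SMfun0 𝒟 Φ2I Φ2J f₂ z * SSfun 𝒟 Φ3I Φ3J f₃ z := by
  set SMterm : ℤ × ℤ → ℝ≥0∞ := fun I =>
    (⨆ (J : ℤ × ℤ) (_ : (I, J) ∈ 𝒟),
        ENNReal.ofReal (‖pair2 f₂ (Φ2I I) (Φ2J J)‖ ^ 2 / dyadLen J) * indE J z.2)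
      * (ENNReal.ofReal (dyadLen I))⁻¹ * indE I z.1 with hSMterm
  have hMS : ∀ I : ℤ × ℤ,
      (∑ q ∈ 𝒟.filter (fun q => q.1 = I), sqT ‖pair2 f₁ (Φ1I q.1) (Φ1J q.2)‖ q z) ^ (1/2 : ℝ)
        ≤ MSfun0 𝒟 Φ1I Φ1J f₁ z := by
    intro I
    have hsum : ∑ q ∈ 𝒟.filter (fun q => q.1 = I), sqT ‖pair2 f₁ (Φ1I q.1) (Φ1J q.2)‖ q z
        = ((ENNReal.ofReal (dyadLen I))⁻¹ *
            ∑ q ∈ 𝒟.filter (fun q => q.1 = I),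
              ENNReal.ofReal (‖pair2 f₁ (Φ1I I) (Φ1J q.2)‖ ^ 2 / dyadLen q.2) * indE q.2 z.2)
          * indE I z.1 := by
      rw [Finset.mul_sum, Finset.sum_mul]
      refine Finset.sum_congr rfl fun q hq => ?_
      have hq1 : q.1 = I := (Finset.mem_filter.1 hq).2
      unfold sqT
      rw [ofReal_div_len, hq1]
      ring
    rw [hsum, ENNReal.mul_rpow_of_nonneg _ _ (by norm_num), indE_rpow_half]
    unfold MSfun0
    exact le_iSup (fun I : ℤ × ℤ =>
      ((ENNReal.ofReal (dyadLen I))⁻¹ *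
          ∑ q ∈ 𝒟.filter (fun q => q.1 = I),
            ENNReal.ofReal (‖pair2 f₁ (Φ1I I) (Φ1J q.2)‖ ^ 2 / dyadLen q.2) * indE q.2 z.2)
          ^ (1 / 2 : ℝ) * indE I z.1) I
  have hB : ∀ q ∈ 𝒟, sqT ‖pair2 f₂ (Φ2I q.1) (Φ2J q.2)‖ q z ≤ SMterm q.1 := by
    intro q hq
    have hq' : (q.1, q.2) ∈ 𝒟 := by simpa using hq
    have key : ENNReal.ofReal (‖pair2 f₂ (Φ2I q.1) (Φ2J q.2)‖ ^ 2 / dyadLen q.2) * indE q.2 z.2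
        ≤ ⨆ (J : ℤ × ℤ) (_ : (q.1, J) ∈ 𝒟),
            ENNReal.ofReal (‖pair2 f₂ (Φ2I q.1) (Φ2J J)‖ ^ 2 / dyadLen J) * indE J z.2 :=
      le_iSup₂ (f := fun (J : ℤ × ℤ) (_ : (q.1, J) ∈ 𝒟) =>
        ENNReal.ofReal (‖pair2 f₂ (Φ2I q.1) (Φ2J J)‖ ^ 2 / dyadLen J) * indE J z.2) q.2 hq'
    have heq : sqT ‖pair2 f₂ (Φ2I q.1) (Φ2J q.2)‖ q z
        = (ENNReal.ofReal (‖pair2 f₂ (Φ2I q.1) (Φ2J q.2)‖ ^ 2 / dyadLen q.2) * indE q.2 z.2)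
            * (ENNReal.ofReal (dyadLen q.1))⁻¹ * indE q.1 z.1 := by
      unfold sqT
      rw [ofReal_div_len]
      ring
    rw [heq, hSMterm]
    exact mul_le_mul_left (mul_le_mul_left key _) _
  rw [← Finset.sum_fiberwise_of_maps_to
    (fun q hq => Finset.mem_image_of_mem Prod.fst hq : ∀ q ∈ 𝒟, q.1 ∈ 𝒟.image Prod.fst)
    (fun q => sqT ‖pair2 f₁ (Φ1I q.1) (Φ1J q.2)‖ q z ^ (1/2 : ℝ)
        * sqT ‖pair2 f₂ (Φ2I q.1) (Φ2J q.2)‖ q z ^ (1/2 : ℝ)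
        * sqT ‖pair2 f₃ (Φ3I q.1) (Φ3J q.2)‖ q z ^ (1/2 : ℝ))]
  have hfiber : ∀ I ∈ 𝒟.image Prod.fst,
      ∑ q ∈ 𝒟.filter (fun q => q.1 = I),
          sqT ‖pair2 f₁ (Φ1I q.1) (Φ1J q.2)‖ q z ^ (1/2 : ℝ)
            * sqT ‖pair2 f₂ (Φ2I q.1) (Φ2J q.2)‖ q z ^ (1/2 : ℝ)
            * sqT ‖pair2 f₃ (Φ3I q.1) (Φ3J q.2)‖ q z ^ (1/2 : ℝ)
        ≤ MSfun0 𝒟 Φ1I Φ1J f₁ z * (SMterm I ^ (1/2 : ℝ) *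
            (∑ q ∈ 𝒟.filter (fun q => q.1 = I),
              sqT ‖pair2 f₃ (Φ3I q.1) (Φ3J q.2)‖ q z) ^ (1/2 : ℝ)) := by
    intro I hI
    calc ∑ q ∈ 𝒟.filter (fun q => q.1 = I),
          sqT ‖pair2 f₁ (Φ1I q.1) (Φ1J q.2)‖ q z ^ (1/2 : ℝ)
            * sqT ‖pair2 f₂ (Φ2I q.1) (Φ2J q.2)‖ q z ^ (1/2 : ℝ)
            * sqT ‖pair2 f₃ (Φ3I q.1) (Φ3J q.2)‖ q z ^ (1/2 : ℝ)
        ≤ ∑ q ∈ 𝒟.filter (fun q => q.1 = I),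
            sqT ‖pair2 f₁ (Φ1I q.1) (Φ1J q.2)‖ q z ^ (1/2 : ℝ)
              * SMterm I ^ (1/2 : ℝ)
              * sqT ‖pair2 f₃ (Φ3I q.1) (Φ3J q.2)‖ q z ^ (1/2 : ℝ) := by
          refine Finset.sum_le_sum fun q hq => ?_
          have hq1 : q.1 = I := (Finset.mem_filter.1 hq).2
          have hle : sqT ‖pair2 f₂ (Φ2I q.1) (Φ2J q.2)‖ q z ≤ SMterm I := by
            rw [← hq1]
            exact hB q (Finset.mem_filter.1 hq).1
          exact mul_le_mul_left (mul_le_mul_right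
            (ENNReal.rpow_le_rpow hle (by norm_num : (0:ℝ) ≤ 1/2)) _) _
      _ = SMterm I ^ (1/2 : ℝ) * ∑ q ∈ 𝒟.filter (fun q => q.1 = I),
            sqT ‖pair2 f₁ (Φ1I q.1) (Φ1J q.2)‖ q z ^ (1/2 : ℝ)
              * sqT ‖pair2 f₃ (Φ3I q.1) (Φ3J q.2)‖ q z ^ (1/2 : ℝ) := by
          rw [Finset.mul_sum]
          exact Finset.sum_congr rfl fun q hq => by ring
      _ ≤ SMterm I ^ (1/2 : ℝ) *
            ((∑ q ∈ 𝒟.filter (fun q => q.1 = I), sqT ‖pair2 f₁ (Φ1I q.1) (Φ1J q.2)‖ q z) ^ (1/2:ℝ)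
              * (∑ q ∈ 𝒟.filter (fun q => q.1 = I),
                  sqT ‖pair2 f₃ (Φ3I q.1) (Φ3J q.2)‖ q z) ^ (1/2:ℝ)) :=
          mul_le_mul_right (enn_cs _ _ _) _
      _ ≤ SMterm I ^ (1/2 : ℝ) * (MSfun0 𝒟 Φ1I Φ1J f₁ z *
            (∑ q ∈ 𝒟.filter (fun q => q.1 = I),
              sqT ‖pair2 f₃ (Φ3I q.1) (Φ3J q.2)‖ q z) ^ (1/2:ℝ)) :=
          mul_le_mul_right (mul_le_mul_left (hMS I) _) _
      _ = MSfun0 𝒟 Φ1I Φ1J f₁ z * (SMterm I ^ (1/2 : ℝ) *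
            (∑ q ∈ 𝒟.filter (fun q => q.1 = I),
              sqT ‖pair2 f₃ (Φ3I q.1) (Φ3J q.2)‖ q z) ^ (1/2:ℝ)) := by ring
  calc ∑ I ∈ 𝒟.image Prod.fst, ∑ q ∈ 𝒟.filter (fun q => q.1 = I),
          sqT ‖pair2 f₁ (Φ1I q.1) (Φ1J q.2)‖ q z ^ (1/2 : ℝ)
            * sqT ‖pair2 f₂ (Φ2I q.1) (Φ2J q.2)‖ q z ^ (1/2 : ℝ)
            * sqT ‖pair2 f₃ (Φ3I q.1) (Φ3J q.2)‖ q z ^ (1/2 : ℝ)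
      ≤ ∑ I ∈ 𝒟.image Prod.fst, MSfun0 𝒟 Φ1I Φ1J f₁ z * (SMterm I ^ (1/2 : ℝ) *
            (∑ q ∈ 𝒟.filter (fun q => q.1 = I),
              sqT ‖pair2 f₃ (Φ3I q.1) (Φ3J q.2)‖ q z) ^ (1/2:ℝ)) :=
        Finset.sum_le_sum hfiber
    _ = MSfun0 𝒟 Φ1I Φ1J f₁ z * ∑ I ∈ 𝒟.image Prod.fst, SMterm I ^ (1/2 : ℝ) *
            (∑ q ∈ 𝒟.filter (fun q => q.1 = I),
              sqT ‖pair2 f₃ (Φ3I q.1) (Φ3J q.2)‖ q z) ^ (1/2:ℝ) := by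
        rw [Finset.mul_sum]
    _ ≤ MSfun0 𝒟 Φ1I Φ1J f₁ z * ((∑ I ∈ 𝒟.image Prod.fst, SMterm I) ^ (1/2:ℝ) *
            (∑ I ∈ 𝒟.image Prod.fst, ∑ q ∈ 𝒟.filter (fun q => q.1 = I),
              sqT ‖pair2 f₃ (Φ3I q.1) (Φ3J q.2)‖ q z) ^ (1/2:ℝ)) :=
        mul_le_mul_right (enn_cs _ _ _) _
    _ = MSfun0 𝒟 Φ1I Φ1J f₁ z * (SMfun0 𝒟 Φ2I Φ2J f₂ z * SSfun 𝒟 Φ3I Φ3J f₃ z) := by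
        rw [Finset.sum_fiberwise_of_maps_to
          (fun q hq => Finset.mem_image_of_mem Prod.fst hq : ∀ q ∈ 𝒟, q.1 ∈ 𝒟.image Prod.fst)
          (fun q => sqT ‖pair2 f₃ (Φ3I q.1) (Φ3J q.2)‖ q z)]
        rfl
    _ = MSfun0 𝒟 Φ1I Φ1J f₁ z * SMfun0 𝒟 Φ2I Φ2J f₂ z * SSfun 𝒟 Φ3I Φ3J f₃ z :=
        (mul_assoc _ _ _).symm

/-- the bi-parameter paraproduct trilinear form is dominated by
`∫ MS(f₁) SM(f₂) SS(f₃)`. -/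
theorem biparameter_form_bound (Cb : ℕ → ℕ → ℝ) :
    ∃ C : ℝ, 0 < C ∧
      ∀ (𝒟 : Finset ((ℤ × ℤ) × (ℤ × ℤ)))
        (Φ1I Φ1J Φ2I Φ2J Φ3I Φ3J : ℤ × ℤ → ℝ → ℂ) (f₁ f₂ f₃ : ℝ × ℝ → ℂ),
        (∀ I : ℤ × ℤ, IsNormBump Cb (dyadCenter I) (dyadLen I) (Φ1I I)) →
        (∀ I : ℤ × ℤ, IsNormBump Cb (dyadCenter I) (dyadLen I) (Φ2I I)) →
        (∀ I : ℤ × ℤ, IsNormBump Cb (dyadCenter I) (dyadLen I) (Φ3I I)) →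
        (∀ J : ℤ × ℤ, IsNormBump Cb (dyadCenter J) (dyadLen J) (Φ1J J)) →
        (∀ J : ℤ × ℤ, IsNormBump Cb (dyadCenter J) (dyadLen J) (Φ2J J)) →
        (∀ J : ℤ × ℤ, IsNormBump Cb (dyadCenter J) (dyadLen J) (Φ3J J)) →
        (∀ I : ℤ × ℤ, (∫ x : ℝ, Φ2I I x) = 0) →
        (∀ I : ℤ × ℤ, (∫ x : ℝ, Φ3I I x) = 0) →
        (∀ J : ℤ × ℤ, (∫ y : ℝ, Φ1J J y) = 0) →
        (∀ J : ℤ × ℤ, (∫ y : ℝ, Φ3J J y) = 0) →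
        MeasureTheory.Integrable f₁ → MeasureTheory.Integrable f₂ →
        MeasureTheory.Integrable f₃ →
        ENNReal.ofReal
            ‖∑ q ∈ 𝒟, (((dyadLen q.1 * dyadLen q.2) ^ (-(1 : ℝ) / 2) : ℝ) : ℂ) *
                pair2 f₁ (Φ1I q.1) (Φ1J q.2) * pair2 f₂ (Φ2I q.1) (Φ2J q.2) *
                pair2 f₃ (Φ3I q.1) (Φ3J q.2)‖
          ≤ ENNReal.ofReal C *
              ∫⁻ z : ℝ × ℝ, MSfun0 𝒟 Φ1I Φ1J f₁ z * SMfun0 𝒟 Φ2I Φ2J f₂ z *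
                SSfun 𝒟 Φ3I Φ3J f₃ z := by
  refine ⟨1, one_pos, ?_⟩
  intro 𝒟 Φ1I Φ1J Φ2I Φ2J Φ3I Φ3J f₁ f₂ f₃ _ _ _ _ _ _ _ _ _ _ _ _ _
  rw [ENNReal.ofReal_one, one_mul]
  calc ENNReal.ofReal ‖∑ q ∈ 𝒟, (((dyadLen q.1 * dyadLen q.2) ^ (-(1 : ℝ) / 2) : ℝ) : ℂ) *
            pair2 f₁ (Φ1I q.1) (Φ1J q.2) * pair2 f₂ (Φ2I q.1) (Φ2J q.2) *
            pair2 f₃ (Φ3I q.1) (Φ3J q.2)‖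
      ≤ ∑ q ∈ 𝒟, ENNReal.ofReal ‖(((dyadLen q.1 * dyadLen q.2) ^ (-(1 : ℝ) / 2) : ℝ) : ℂ) *
            pair2 f₁ (Φ1I q.1) (Φ1J q.2) * pair2 f₂ (Φ2I q.1) (Φ2J q.2) *
            pair2 f₃ (Φ3I q.1) (Φ3J q.2)‖ := by
        rw [← ENNReal.ofReal_sum_of_nonneg (fun q _ => norm_nonneg _)]
        exact ENNReal.ofReal_le_ofReal (norm_sum_le _ _)
    _ = ∑ q ∈ 𝒟, ∫⁻ z : ℝ × ℝ, sqT ‖pair2 f₁ (Φ1I q.1) (Φ1J q.2)‖ q z ^ (1/2 : ℝ) *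
            sqT ‖pair2 f₂ (Φ2I q.1) (Φ2J q.2)‖ q z ^ (1/2 : ℝ) *
            sqT ‖pair2 f₃ (Φ3I q.1) (Φ3J q.2)‖ q z ^ (1/2 : ℝ) := by
        refine Finset.sum_congr rfl fun q _ => ?_
        rw [lintegral_triple _ _ _ (norm_nonneg _) (norm_nonneg _) (norm_nonneg _) q]
        congr 1
        rw [norm_mul, norm_mul, norm_mul, Complex.norm_real, Real.norm_eq_abs,
          abs_of_nonneg (Real.rpow_nonneg
            (mul_pos (dyadLen_pos q.1) (dyadLen_pos q.2)).le _)]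
        ring
    _ = ∫⁻ z : ℝ × ℝ, ∑ q ∈ 𝒟, sqT ‖pair2 f₁ (Φ1I q.1) (Φ1J q.2)‖ q z ^ (1/2 : ℝ) *
            sqT ‖pair2 f₂ (Φ2I q.1) (Φ2J q.2)‖ q z ^ (1/2 : ℝ) *
            sqT ‖pair2 f₃ (Φ3I q.1) (Φ3J q.2)‖ q z ^ (1/2 : ℝ) :=
        (lintegral_finset_sum _ fun q _ =>
          (((measurable_sqT _ q).pow measurable_const).mul
            ((measurable_sqT _ q).pow measurable_const)).mul
            ((measurable_sqT _ q).pow measurable_const)).symm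
    _ ≤ ∫⁻ z : ℝ × ℝ, MSfun0 𝒟 Φ1I Φ1J f₁ z * SMfun0 𝒟 Φ2I Φ2J f₂ z *
            SSfun 𝒟 Φ3I Φ3J f₃ z :=
        lintegral_mono (pointwise_bound 𝒟 Φ1I Φ1J Φ2I Φ2J Φ3I Φ3J f₁ f₂ f₃)
end
end
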